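/- Let 0 → X_n → ⋯ → X_1 → X_0 → M → 0 be an exact sequence of Λ-modules with n ≥ 0. Then M belongs to [X_0]_1 • [Ω^{-1}(X_1)]_1 • ⋯ • [Ω^{-n}(X_n)]_1, and in particular M ∈ [⊕_{i=0}^n Ω^{-i}(X_i)]_{n+1}. -/

import Mathlib

open CategoryTheory

namespace ITPaper

variable (R : Type) [Ring R]

/-- `X` is a direct summand of `Y`. -/
def IsSummand (X Y : ModuleCat.{0} R) : Prop :=
  ∃ (i : X ⟶ Y) (p : Y ⟶ X), i ≫ p = 𝟙 X

/-- The additive closure `add S` of a class of modules: direct summands of finite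
direct sums of members of `S`. -/
def addClosure (S : Set (ModuleCat.{0} R)) : Set (ModuleCat.{0} R) :=
  {X | ∃ (n : ℕ) (f : Fin n → ModuleCat.{0} R), (∀ i, f i ∈ S) ∧
    IsSummand R X (ModuleCat.of R (∀ i, f i))}

/-- `add T` for a single module `T`. -/
def addOf (T : ModuleCat.{0} R) : Set (ModuleCat.{0} R) := addClosure R {T}

/-- There is a short exact sequence `0 → A → B → C → 0`. -/
def SES (A B C : ModuleCat.{0} R) : Prop :=
  ∃ (f : A ⟶ B) (g : B ⟶ C),
    Function.Injective ⇑f ∧ Function.Surjective ⇑g ∧ Function.Exact ⇑f ⇑g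

/-- The extension product `U • V` of two classes of modules. -/
def bullet (U V : Set (ModuleCat.{0} R)) : Set (ModuleCat.{0} R) :=
  addClosure R {M | ∃ A ∈ U, ∃ C ∈ V, SES R A M C}

/-- `[T]ₙ`, the class of modules obtained from `add T` by `n`-fold extensions. -/
def bracket (T : ModuleCat.{0} R) : ℕ → Set (ModuleCat.{0} R)
  | 0 => {X | Subsingleton X}
  | 1 => addOf R T
  | (n+2) => bullet R (addOf R T) (bracket T (n+1))

/-- `U₁ • U₂ • ⋯ • Uₖ`, iterated extension product (associated to the right). -/
def bulletChain : List (Set (ModuleCat.{0} R)) → Set (ModuleCat.{0} R)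
  | [] => {X | Subsingleton X}
  | [U] => U
  | (U :: V :: rest) => bullet R U (bulletChain (V :: rest))

/-- `0 → M n → M (n-1) → ⋯ → M 1 → M 0 → 0` is exact (for `n ≥ 1`; the values `M i`
for `i > n` are irrelevant).  The differentials go `d i : M (i+1) ⟶ M i`. -/
def IsExactSeq (n : ℕ) (M : ℕ → ModuleCat.{0} R) (d : ∀ i, M (i+1) ⟶ M i) : Prop :=
  Function.Surjective ⇑(d 0) ∧ Function.Injective ⇑(d (n-1)) ∧
    ∀ i, i + 2 ≤ n → Function.Exact ⇑(d (i+1)) ⇑(d i)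

/-- `f : P ⟶ M` is a projective cover: `P` is projective, `f` is surjective and
its kernel is superfluous in `P`. -/
def IsProjCover {P M : ModuleCat.{0} R} (f : P ⟶ M) : Prop :=
  Module.Projective R P ∧ Function.Surjective ⇑f ∧
    ∀ N : Submodule R P, N ⊔ LinearMap.ker f.hom = ⊤ → N = ⊤

/-- `K` is a (first) syzygy of `M`, i.e. the kernel of a projective cover of `M`. -/
def IsSyzygyOf (M K : ModuleCat.{0} R) : Prop :=
  ∃ (P : ModuleCat.{0} R) (f : P ⟶ M), IsProjCover R f ∧
    Nonempty (K ≅ ModuleCat.of R (LinearMap.ker f.hom))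

/-- `K` is an `n`-th syzygy `Ωⁿ(M)` of `M`. -/
def IsNSyzygy : ℕ → ModuleCat.{0} R → ModuleCat.{0} R → Prop
  | 0, M, K => Nonempty (K ≅ M)
  | (n+1), M, K => ∃ K', IsNSyzygy n M K' ∧ IsSyzygyOf R K' K

/-- `g : M ⟶ I` is an injective envelope: `I` is injective, `g` is injective and
its image is essential in `I`. -/
def IsInjEnvelope {M I : ModuleCat.{0} R} (g : M ⟶ I) : Prop :=
  Module.Injective R I ∧ Function.Injective ⇑g ∧
    ∀ N : Submodule R I, N ⊓ LinearMap.range g.hom = ⊥ → N = ⊥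

/-- `K` is a (first) cosyzygy of `M`, i.e. the cokernel of an injective envelope. -/
def IsCosyzygyOf (M K : ModuleCat.{0} R) : Prop :=
  ∃ (I : ModuleCat.{0} R) (g : M ⟶ I), IsInjEnvelope R g ∧
    Nonempty (K ≅ ModuleCat.of R (I ⧸ LinearMap.range g.hom))

/-- `K` is an `n`-th cosyzygy `Ω⁻ⁿ(M)` of `M`. -/
def IsNCosyzygy : ℕ → ModuleCat.{0} R → ModuleCat.{0} R → Prop
  | 0, M, K => Nonempty (K ≅ M)
  | (n+1), M, K => ∃ K', IsNCosyzygy n M K' ∧ IsCosyzygyOf R K' K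

/-- `K` admits an exact sequence `0 → V_m → ⋯ → V_1 → V_0 → K → 0`
with all `V_i ∈ add V`. -/
def HasAddResolution (V : ModuleCat.{0} R) (m : ℕ) (K : ModuleCat.{0} R) : Prop :=
  ∃ (Z : ℕ → ModuleCat.{0} R) (d : ∀ i, Z (i+1) ⟶ Z i),
    IsExactSeq R (m+1) Z d ∧ Nonempty (Z 0 ≅ K) ∧
    ∀ i, 1 ≤ i → i ≤ m+1 → Z i ∈ addOf R V

/-- The defining property of Oppermann's weak resolution dimension at `n`. -/
def OppResolProp (n : ℕ) : Prop :=
  ∃ V : ModuleCat.{0} R, Module.Finite R V ∧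
    ∀ X : ModuleCat.{0} R, Module.Finite R X → HasAddResolution R V n X

/-- The defining property of Iyama's weak resolution dimension at `n`. -/
def IyamaResolProp (n : ℕ) : Prop :=
  ∃ V : ModuleCat.{0} R, Module.Finite R V ∧
    ∀ X : ModuleCat.{0} R, Module.Finite R X →
      ∃ Y : ModuleCat.{0} R, Module.Finite R Y ∧ X ∈ addOf R Y ∧
        HasAddResolution R V n Y

/-- Oppermann's weak resolution dimension. -/
noncomputable def owresoldim : ℕ∞ :=
  sInf {c : ℕ∞ | ∃ n : ℕ, c = n ∧ OppResolProp R n}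

/-- Iyama's weak resolution dimension. -/
noncomputable def wresoldim : ℕ∞ :=
  sInf {c : ℕ∞ | ∃ n : ℕ, c = n ∧ IyamaResolProp R n}

/-- `Λ` is an `(m,n)`-Igusa–Todorov algebra. -/
def IsITAlgebra (m n : ℕ) : Prop :=
  ∃ V : ModuleCat.{0} R, Module.Finite R V ∧
    ∀ M : ModuleCat.{0} R, Module.Finite R M →
      ∀ K : ModuleCat.{0} R, IsNSyzygy R n M K → HasAddResolution R V m K

/-- The Igusa–Todorov dimension of `Λ`. -/
noncomputable def ITdim : ℕ∞ :=
  sInf {c : ℕ∞ | ∃ m n : ℕ, c = m ∧ IsITAlgebra R m n}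

end ITPaper

/-!
Induct on `n`. The kernel `K` of `X₀ → M` has the shorter resolution by `X₁, …, Xₙ`, so
`K ∈ [X₁]₁ • [Ω⁻¹X₂]₁ • ⋯ • [Ω⁻⁽ⁿ⁻¹⁾Xₙ]₁`. Cosyzygies pass through such a chain: `K` embeds in an
injective `J` with `J / K ∈ [Ω⁻¹X₁]₁ • ⋯ • [Ω⁻ⁿXₙ]₁`. For finite sums and extensions this is the
(dual) horseshoe lemma; for a direct summand `X` of `Y ⊆ I` one embeds `X` in its injective hull
inside `I`, which splits off compatibly with `Y`. Finally the pushout of `0 → K → X₀ → M → 0`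
along `K ↪ J` is an extension `0 → X₀ → J ⊕ M → J / K → 0`, of which `M` is a direct summand.
-/

universe u v

section InjectiveModules

variable {R : Type u} [Ring R]

theorem Module.Injective.of_retract {M I : Type v} [AddCommGroup M] [Module R M]
    [AddCommGroup I] [Module R I] [Module.Injective R I] (i : M →ₗ[R] I) (p : I →ₗ[R] M)
    (hpi : p ∘ₗ i = LinearMap.id) : Module.Injective R M where
  out _ _ _ _ _ _ f hf g := by
    obtain ⟨e, he⟩ := Module.Injective.out f hf (i ∘ₗ g)
    exact ⟨p ∘ₗ e, fun x => by simp [he, ← LinearMap.comp_apply p i, hpi]⟩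

instance Module.Injective.prod {A B : Type v} [AddCommGroup A] [Module R A] [AddCommGroup B]
    [Module R B] [Module.Injective R A] [Module.Injective R B] :
    Module.Injective R (A × B) where
  out _ _ _ _ _ _ f hf g := by
    obtain ⟨e₁, he₁⟩ := Module.Injective.out f hf (LinearMap.fst R A B ∘ₗ g)
    obtain ⟨e₂, he₂⟩ := Module.Injective.out f hf (LinearMap.snd R A B ∘ₗ g)
    exact ⟨e₁.prod e₂, fun x => Prod.ext (he₁ x) (he₂ x)⟩

theorem Function.Exact.exists_comp_eq {M N P P' : Type*} [AddCommGroup M] [Module R M]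
    [AddCommGroup N] [Module R N] [AddCommGroup P] [Module R P] [AddCommGroup P'] [Module R P']
    {f : M →ₗ[R] N} {g : N →ₗ[R] P} (hfg : Function.Exact f g) (hg : Function.Surjective g)
    (k : N →ₗ[R] P') (hk : k ∘ₗ f = 0) : ∃ k' : P →ₗ[R] P', k' ∘ₗ g = k :=
  ⟨(LinearMap.range f).liftQ k (LinearMap.range_le_ker_iff.2 hk) ∘ₗ
    (hfg.linearEquivOfSurjective hg).symm, by ext; simp⟩

theorem Function.Exact.piMap {ι : Type*} {M N P : ι → Type*} [∀ i, AddCommGroup (M i)]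
    [∀ i, Module R (M i)] [∀ i, AddCommGroup (N i)] [∀ i, Module R (N i)]
    [∀ i, AddCommGroup (P i)] [∀ i, Module R (P i)]
    {f : ∀ i, M i →ₗ[R] N i} {g : ∀ i, N i →ₗ[R] P i} (h : ∀ i, Function.Exact (f i) (g i)) :
    Function.Exact (LinearMap.piMap f) (LinearMap.piMap g) := by
  intro y
  simp only [LinearMap.coe_piMap, funext_iff, Pi.map_apply, Pi.zero_apply, h _ _, Set.mem_range]
  exact ⟨fun hy => ⟨fun i => (hy i).choose, fun i => (hy i).choose_spec⟩,
    fun ⟨x, hx⟩ i => ⟨x i, hx i⟩⟩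

end InjectiveModules

theorem exists_maximal_disjoint {α : Type*} [CompleteLattice α] [IsCompactlyGenerated α] (b : α) :
    ∃ a, Maximal (Disjoint · b) a := by
  obtain ⟨a, -, ha⟩ := zorn_le_nonempty₀ {a | Disjoint a b}
    (fun c hc hchain _ _ => ⟨sSup c, (hchain.directedOn.disjoint_sSup_left).2 fun _ h => hc h,
      fun _ => le_sSup⟩) ⊥ disjoint_bot_left
  exact ⟨a, ha⟩

namespace Submodule

variable {R : Type u} {M : Type v} [Ring R] [AddCommGroup M] [Module R M]

theorem injective_mkQ_comp_subtype {H L : Submodule R M} (h : Disjoint H L) :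
    Function.Injective (L.mkQ ∘ₗ H.subtype) := by
  rw [← LinearMap.ker_eq_bot, LinearMap.ker_comp, ker_mkQ, ← disjoint_iff_comap_eq_bot]
  exact h

def IsEssentialExtension (N H : Submodule R M) : Prop :=
  N ≤ H ∧ ∀ P ≤ H, Disjoint P N → P = ⊥

theorem IsEssentialExtension.trans {N H K : Submodule R M} (hNH : IsEssentialExtension N H)
    (hHK : IsEssentialExtension H K) : IsEssentialExtension N K := by
  refine ⟨hNH.1.trans hHK.1, fun P hPK hPN => hHK.2 P hPK (disjoint_iff.2 ?_)⟩
  exact hNH.2 _ inf_le_right (hPN.mono_left inf_le_left)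

theorem IsEssentialExtension.disjoint {N H N' : Submodule R M} (hNH : IsEssentialExtension N H)
    (hNN' : Disjoint N N') : Disjoint H N' :=
  disjoint_iff.2 (hNH.2 _ inf_le_left (hNN'.symm.mono_left inf_le_right))

theorem exists_maximal_isEssentialExtension (N : Submodule R M) :
    ∃ H, Maximal (IsEssentialExtension N) H := by
  have hchain : ∀ c ⊆ {H | IsEssentialExtension N H}, IsChain (· ≤ ·) c → ∀ K ∈ c,
      ∃ B ∈ {H | IsEssentialExtension N H}, ∀ H ∈ c, H ≤ B := by
    refine fun c hc hchain K hK => ⟨sSup c, ⟨(hc hK).1.trans (le_sSup hK), fun P hP hPN => ?_⟩,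
      fun _ => le_sSup⟩
    rw [← inf_eq_left.2 hP, hchain.directedOn.inf_sSup_eq, iSup₂_eq_bot]
    exact fun L hL => (hc hL).2 _ inf_le_right (hPN.mono_left inf_le_left)
  obtain ⟨H, -, hH⟩ := zorn_le_nonempty₀ _ hchain N ⟨le_rfl, fun _ hP hPN => hPN.eq_bot_of_le hP⟩
  exact ⟨H, hH⟩

theorem injective_of_maximal_isEssentialExtension [Module.Injective R M] {N H : Submodule R M}
    (hH : Maximal (IsEssentialExtension N) H) : Module.Injective R H := by
  obtain ⟨L, hL⟩ := exists_maximal_disjoint H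
  obtain ⟨ρ, hρ⟩ := Module.Injective.out _ (injective_mkQ_comp_subtype hL.1.symm) H.subtype
  set r := ρ ∘ₗ L.mkQ
  have hrH : ∀ x : H, r x = x := hρ
  have hrL : ∀ x ∈ L, r x = 0 := fun x hx => by simp [r, (Quotient.mk_eq_zero L).2 hx]
  have hle : H ≤ LinearMap.range r := fun x hx => ⟨x, hrH ⟨x, hx⟩⟩
  -- `r` kills the complement `L` of `H`, so its range is essential over `H`.
  have hess : IsEssentialExtension H (LinearMap.range r) := by
    refine ⟨hle, fun P hP hPH => ?_⟩
    have hLP : L ≤ P.comap r := fun x hx => by simp [hrL x hx]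
    have hdisj : Disjoint (P.comap r) H := by
      refine disjoint_def.2 fun x hxP hxH => ?_
      have := hrH ⟨x, hxH⟩
      exact disjoint_def.1 hPH x (by simpa [this] using hxP) hxH
    rw [eq_bot_iff, ← map_comap_eq_self hP, map_le_iff_le_comap]
    exact fun x hx => by simp [hrL x (hL.2 hdisj hLP hx)]
  have hrange : LinearMap.range r ≤ H := hH.2 (hH.1.trans hess) hle
  exact Module.Injective.of_retract H.subtype (r.codRestrict H fun x => hrange ⟨x, rfl⟩)
    (LinearMap.ext fun x => Subtype.ext (hrH x))

theorem exists_injective_le_disjoint [Module.Injective R M] {N N' : Submodule R M}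
    (hNN' : Disjoint N N') : ∃ H : Submodule R M, N ≤ H ∧ Disjoint H N' ∧ Module.Injective R H :=
  let ⟨H, hH⟩ := exists_maximal_isEssentialExtension N
  ⟨H, hH.1.1, hH.1.disjoint hNN', injective_of_maximal_isEssentialExtension hH⟩

end Submodule

section InjectiveCopresentations

variable {R : Type u} [Ring R]

theorem exists_injective_copresentation_of_retract {X Y J Q : Type v} [AddCommGroup X] [Module R X]
    [AddCommGroup Y] [Module R Y] [AddCommGroup J] [Module R J] [AddCommGroup Q] [Module R Q]
    [Module.Injective R J] {s : X →ₗ[R] Y} {p : Y →ₗ[R] X} (hps : p ∘ₗ s = LinearMap.id)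
    {v : Y →ₗ[R] J} (hv : Function.Injective v) {π : J →ₗ[R] Q}
    (hπ : Function.Surjective π) (hvπ : Function.Exact v π) :
    ∃ (H : Submodule R J) (u : X →ₗ[R] H), Module.Injective R H ∧ Function.Injective u ∧
      ∃ (α : (H ⧸ LinearMap.range u) →ₗ[R] Q) (β : Q →ₗ[R] H ⧸ LinearMap.range u),
        β ∘ₗ α = LinearMap.id := by
  have hps' : ∀ x, p (s x) = x := LinearMap.congr_fun hps
  set N := (LinearMap.range s).map v
  set N' := (LinearMap.ker p).map v
  have hNN' : Disjoint N N' := by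
    refine Submodule.disjoint_map hv (Submodule.disjoint_def.2 ?_)
    rintro _ ⟨x, rfl⟩ hx
    rw [← hps' x, LinearMap.mem_ker.1 hx, map_zero]
  obtain ⟨H, hNH, hHN', hH⟩ := Submodule.exists_injective_le_disjoint hNN'
  set u : X →ₗ[R] H := (v ∘ₗ s).codRestrict H fun x => hNH ⟨s x, ⟨x, rfl⟩, rfl⟩
  have hu : Function.Injective u := fun x y hxy => by
    simpa [hps'] using congrArg p (hv (congrArg Subtype.val hxy))
  -- `ψ : J → H` retracts onto `H` and kills `N'`; it exists because `H` is injective.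
  obtain ⟨ρ, hρ⟩ := Module.Injective.out _ (Submodule.injective_mkQ_comp_subtype hHN') LinearMap.id
  set ψ := ρ ∘ₗ N'.mkQ
  have hψH : ∀ x : H, ψ x = x := hρ
  have hψv : ∀ y, ψ (v y) = u (p y) := fun y => by
    have hker : y - s (p y) ∈ LinearMap.ker p := by simp [hps']
    have : N'.mkQ (v y) = N'.mkQ (v (s (p y))) := by
      rw [Submodule.mkQ_apply, Submodule.mkQ_apply, Submodule.Quotient.eq, ← map_sub]
      exact ⟨_, hker, rfl⟩
    simp only [ψ, LinearMap.comp_apply, this]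
    exact hψH (u (p y))
  refine ⟨H, u, hH, hu, (LinearMap.range u).liftQ (π ∘ₗ H.subtype) ?_, ?_⟩
  · rintro _ ⟨x, rfl⟩
    exact (hvπ _).2 ⟨s x, rfl⟩
  obtain ⟨β, hβ⟩ := hvπ.exists_comp_eq hπ ((LinearMap.range u).mkQ ∘ₗ ψ) (by ext y; simp [hψv])
  refine ⟨β, Submodule.linearMap_qext _ (LinearMap.ext fun x => ?_)⟩
  simpa [hψH] using LinearMap.congr_fun hβ (x : J)

-- Dual horseshoe lemma.
theorem exists_injective_copresentation_of_ses {A B C JA JC QA QC : Type v}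
    [AddCommGroup A] [Module R A] [AddCommGroup B] [Module R B] [AddCommGroup C] [Module R C]
    [AddCommGroup JA] [Module R JA] [AddCommGroup JC] [Module R JC]
    [AddCommGroup QA] [Module R QA] [AddCommGroup QC] [Module R QC] [Module.Injective R JA]
    {f : A →ₗ[R] B} {g : B →ₗ[R] C} (hf : Function.Injective f) (hg : Function.Surjective g)
    (hfg : Function.Exact f g) {a : A →ₗ[R] JA} (ha : Function.Injective a) {πa : JA →ₗ[R] QA}
    (hπa : Function.Surjective πa) (haπ : Function.Exact a πa)
    {c : C →ₗ[R] JC} (hc : Function.Injective c) {πc : JC →ₗ[R] QC}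
    (hπc : Function.Surjective πc) (hcπ : Function.Exact c πc) :
    ∃ (w : B →ₗ[R] JA × JC) (qa : QA →ₗ[R] (JA × JC) ⧸ LinearMap.range w)
      (qc : (JA × JC) ⧸ LinearMap.range w →ₗ[R] QC),
      Function.Injective w ∧ Function.Injective qa ∧ Function.Surjective qc ∧
        Function.Exact qa qc := by
  obtain ⟨φ, hφ⟩ := Module.Injective.out f hf a
  set w := φ.prod (c ∘ₗ g)
  have hwf : ∀ x, w (f x) = (a x, 0) := fun x => by simp [w, hφ, hfg.apply_apply_eq_zero]
  have hw : Function.Injective w := by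
    refine (injective_iff_map_eq_zero w).2 fun b hb => ?_
    obtain ⟨x, rfl⟩ := (hfg b).1 (hc.eq_iff' (map_zero c) |>.1 (congrArg Prod.snd hb))
    rw [hwf, Prod.mk_eq_zero] at hb
    simp [ha.eq_iff' (map_zero a) |>.1 hb.1]
  set p := LinearMap.range w
  obtain ⟨qa, hqa⟩ := haπ.exists_comp_eq hπa (p.mkQ ∘ₗ LinearMap.inl R JA JC) (by
    ext x
    simpa [Submodule.Quotient.mk_eq_zero, ← hwf] using ⟨f x, rfl⟩)
  have hqa' : ∀ j, qa (πa j) = Submodule.Quotient.mk (j, 0) := LinearMap.congr_fun hqa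
  set qc := p.liftQ (πc ∘ₗ LinearMap.snd R JA JC) (by
    rintro _ ⟨b, rfl⟩
    simpa [w] using hcπ.apply_apply_eq_zero (g b))
  refine ⟨w, qa, qc, hw, (injective_iff_map_eq_zero qa).2 fun z hz => ?_,
    fun z => ?_, fun z => ?_⟩
  · obtain ⟨j, rfl⟩ := hπa z
    rw [hqa', Submodule.Quotient.mk_eq_zero] at hz
    obtain ⟨b, hb⟩ := hz
    obtain ⟨x, rfl⟩ := (hfg b).1 (hc.eq_iff' (map_zero c) |>.1 (congrArg Prod.snd hb))
    rw [hwf, Prod.mk.injEq] at hb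
    exact (haπ j).2 ⟨x, hb.1⟩
  · obtain ⟨j, rfl⟩ := hπc z
    exact ⟨Submodule.Quotient.mk (0, j), rfl⟩
  · obtain ⟨⟨j, j'⟩, rfl⟩ := Submodule.Quotient.mk_surjective p z
    refine ⟨fun hz => ?_, ?_⟩
    · obtain ⟨y, hy⟩ := (hcπ j').1 hz
      obtain ⟨b, rfl⟩ := hg y
      refine ⟨πa (j - φ b), ?_⟩
      rw [hqa', Submodule.Quotient.eq]
      exact ⟨-b, by simp [w, hy]⟩
    · rintro ⟨z, hz⟩
      obtain ⟨j, rfl⟩ := hπa z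
      simp [← hz, hqa', qc]

theorem exists_ses_prod_of_injective {K B M J Q : Type v}
    [AddCommGroup K] [Module R K] [AddCommGroup B] [Module R B] [AddCommGroup M] [Module R M]
    [AddCommGroup J] [Module R J] [AddCommGroup Q] [Module R Q] [Module.Injective R J]
    {f : K →ₗ[R] B} {g : B →ₗ[R] M} (hf : Function.Injective f) (hg : Function.Surjective g)
    (hfg : Function.Exact f g) {v : K →ₗ[R] J} (hv : Function.Injective v) {π : J →ₗ[R] Q}
    (hπ : Function.Surjective π) (hvπ : Function.Exact v π) :
    ∃ (i : B →ₗ[R] J × M) (q : J × M →ₗ[R] Q),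
      Function.Injective i ∧ Function.Surjective q ∧ Function.Exact i q := by
  -- `J × M` is the pushout of `B` along `v`, which splits because `J` is injective.
  obtain ⟨φ, hφ⟩ := Module.Injective.out f hf v
  obtain ⟨ψ, hψ⟩ := hfg.exists_comp_eq hg (π ∘ₗ φ) (by ext; simp [hφ, hvπ.apply_apply_eq_zero])
  have hψ' : ∀ b, ψ (g b) = π (φ b) := LinearMap.congr_fun hψ
  refine ⟨φ.prod g, π.coprod (-ψ), (injective_iff_map_eq_zero _).2 fun b hb => ?_,
    fun z => ?_, fun ⟨j, m⟩ => ⟨fun hjm => ?_, ?_⟩⟩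
  · obtain ⟨k, rfl⟩ := (hfg b).1 (congrArg Prod.snd hb)
    have hk : v k = 0 := by simpa [hφ] using congrArg Prod.fst hb
    rw [hv.eq_iff' (map_zero v) |>.1 hk, map_zero]
  · obtain ⟨j, rfl⟩ := hπ z
    exact ⟨(j, 0), by simp⟩
  · obtain ⟨b, rfl⟩ := hg m
    obtain ⟨k, hk⟩ := (hvπ (j - φ b)).1 (by simpa [hψ', ← sub_eq_add_neg] using hjm)
    exact ⟨b + f k, by simp [hφ, hk, hfg.apply_apply_eq_zero]⟩
  · rintro ⟨b, hb⟩
    simp [← hb, hψ']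

end InjectiveCopresentations

namespace ITPaper

variable {R : Type} [Ring R]

theorem isSummand_of_comp_eq_id {X Y : Type} [AddCommGroup X] [Module R X] [AddCommGroup Y]
    [Module R Y] (i : X →ₗ[R] Y) (p : Y →ₗ[R] X) (h : p ∘ₗ i = LinearMap.id) :
    IsSummand R (ModuleCat.of R X) (ModuleCat.of R Y) :=
  ⟨ModuleCat.ofHom i, ModuleCat.ofHom p, by ext x; exact LinearMap.congr_fun h x⟩

theorem isSummand_of_linearEquiv {X Y : Type} [AddCommGroup X] [Module R X] [AddCommGroup Y]
    [Module R Y] (e : X ≃ₗ[R] Y) : IsSummand R (ModuleCat.of R X) (ModuleCat.of R Y) :=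
  isSummand_of_comp_eq_id e.toLinearMap e.symm.toLinearMap (by ext; simp)

theorem isSummand_of_iso {X Y : ModuleCat.{0} R} (e : X ≅ Y) : IsSummand R X Y :=
  ⟨e.hom, e.inv, e.hom_inv_id⟩

theorem IsSummand.trans {X Y Z : ModuleCat.{0} R} (hXY : IsSummand R X Y)
    (hYZ : IsSummand R Y Z) : IsSummand R X Z := by
  obtain ⟨i, p, hip⟩ := hXY
  obtain ⟨j, q, hjq⟩ := hYZ
  exact ⟨i ≫ j, q ≫ p, by simp [reassoc_of% hjq, hip]⟩

theorem isSummand_pi {ι : Type} {A B : ι → ModuleCat.{0} R} (h : ∀ i, IsSummand R (A i) (B i)) :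
    IsSummand R (ModuleCat.of R (∀ i, A i)) (ModuleCat.of R (∀ i, B i)) := by
  choose s p hsp using h
  refine isSummand_of_comp_eq_id (LinearMap.piMap fun i => (s i).hom)
    (LinearMap.piMap fun i => (p i).hom) (LinearMap.ext fun x => funext fun i => ?_)
  simpa using ConcreteCategory.congr_hom (hsp i) (x i)

theorem mem_addClosure_of_isSummand {S : Set (ModuleCat.{0} R)} {X Y : ModuleCat.{0} R}
    (hY : Y ∈ addClosure R S) (h : IsSummand R X Y) : X ∈ addClosure R S :=
  let ⟨k, f, hf, hY⟩ := hY
  ⟨k, f, hf, h.trans hY⟩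

theorem subset_addClosure (S : Set (ModuleCat.{0} R)) : S ⊆ addClosure R S := fun Y hY =>
  ⟨1, fun _ => Y, fun _ => hY, isSummand_of_linearEquiv (LinearEquiv.funUnique (Fin 1) R Y).symm⟩

theorem addOf_subset_addOf {T P : ModuleCat.{0} R} (h : IsSummand R T P) :
    addOf R T ⊆ addOf R P := by
  rintro X ⟨k, f, hf, hX⟩
  exact ⟨k, fun _ => P, fun _ => rfl, hX.trans (isSummand_pi fun i => hf i ▸ h)⟩

theorem bullet_mono {U U' V V' : Set (ModuleCat.{0} R)} (hU : U ⊆ U') (hV : V ⊆ V') :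
    bullet R U V ⊆ bullet R U' V' := by
  rintro X ⟨k, f, hf, hX⟩
  exact ⟨k, f, fun i => (hf i).imp fun A ⟨hA, C, hC, h⟩ => ⟨hU hA, C, hV hC, h⟩, hX⟩

theorem bulletChain_range_succ_succ (n : ℕ) (F : ℕ → Set (ModuleCat.{0} R)) :
    bulletChain R ((List.range (n + 2)).map F) =
      bullet R (F 0) (bulletChain R ((List.range (n + 1)).map fun j => F (j + 1))) := by
  rw [List.range_succ_eq_map, List.map_cons, List.map_map, List.range_succ_eq_map]
  simp only [List.map_cons, List.map_map]
  rfl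

theorem mem_bulletChain_of_isSummand {n : ℕ} {T : ℕ → ModuleCat.{0} R} {X Y : ModuleCat.{0} R}
    (hY : Y ∈ bulletChain R ((List.range (n + 1)).map fun i => addOf R (T i)))
    (h : IsSummand R X Y) :
    X ∈ bulletChain R ((List.range (n + 1)).map fun i => addOf R (T i)) := by
  cases n with
  | zero => exact mem_addClosure_of_isSummand hY h
  | succ n =>
    rw [bulletChain_range_succ_succ] at hY ⊢
    exact mem_addClosure_of_isSummand hY h

theorem bulletChain_subset_bracket (n : ℕ) (S : ℕ → ModuleCat.{0} R) (P : ModuleCat.{0} R)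
    (h : ∀ i ≤ n, IsSummand R (S i) P) :
    bulletChain R ((List.range (n + 1)).map fun i => addOf R (S i)) ⊆ bracket R P (n + 1) := by
  induction n generalizing S with
  | zero => exact addOf_subset_addOf (h 0 le_rfl)
  | succ n ih =>
    rw [bulletChain_range_succ_succ]
    exact bullet_mono (addOf_subset_addOf (h 0 (Nat.zero_le _)))
      (ih (fun j => S (j + 1)) fun j hj => h (j + 1) (by omega))

def HasCosyzygyIn (U : Set (ModuleCat.{0} R)) (X : ModuleCat.{0} R) : Prop :=
  ∃ J Q : ModuleCat.{0} R, Module.Injective R J ∧ Q ∈ U ∧ SES R X J Q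

theorem IsCosyzygyOf.hasCosyzygyIn {T C : ModuleCat.{0} R} (h : IsCosyzygyOf R T C) :
    HasCosyzygyIn {C} T := by
  obtain ⟨I, g, ⟨hI, hg, -⟩, ⟨e⟩⟩ := h
  refine ⟨I, C, hI, rfl, g, ModuleCat.ofHom (LinearMap.range g.hom).mkQ ≫ e.inv, hg, ?_, ?_⟩
  · exact (ConcreteCategory.bijective_of_isIso e.inv).2.comp (Submodule.mkQ_surjective _)
  · exact (LinearMap.exact_map_mkQ_range g.hom).comp_injective _
      (ConcreteCategory.bijective_of_isIso e.inv).1 (map_zero e.inv.hom)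

theorem hasCosyzygyIn_pi {U : Set (ModuleCat.{0} R)} {k : ℕ} {X : Fin k → ModuleCat.{0} R}
    (h : ∀ i, HasCosyzygyIn U (X i)) :
    HasCosyzygyIn (addClosure R U) (ModuleCat.of R (∀ i, X i)) := by
  choose J Q hJ hQ f g hf hg hfg using h
  exact ⟨ModuleCat.of R (∀ i, J i), ModuleCat.of R (∀ i, Q i), inferInstance,
    ⟨k, Q, hQ, isSummand_of_iso (Iso.refl _)⟩,
    ModuleCat.ofHom (LinearMap.piMap fun i => (f i).hom),
    ModuleCat.ofHom (LinearMap.piMap fun i => (g i).hom),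
    Function.Injective.piMap hf, Function.Surjective.piMap hg, Function.Exact.piMap hfg⟩

theorem HasCosyzygyIn.of_isSummand {S : Set (ModuleCat.{0} R)} {X Y : ModuleCat.{0} R}
    (hY : HasCosyzygyIn (addClosure R S) Y) (h : IsSummand R X Y) :
    HasCosyzygyIn (addClosure R S) X := by
  obtain ⟨J, Q, hJ, hQ, v, π, hv, hπ, hvπ⟩ := hY
  obtain ⟨s, p, hsp⟩ := h
  obtain ⟨H, u, hH, hu, α, β, hβα⟩ := exists_injective_copresentation_of_retract
    (s := s.hom) (p := p.hom) (congrArg ModuleCat.Hom.hom hsp) hv hπ hvπ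
  exact ⟨ModuleCat.of R H, ModuleCat.of R (H ⧸ LinearMap.range u), hH,
    mem_addClosure_of_isSummand hQ (isSummand_of_comp_eq_id α β hβα),
    ModuleCat.ofHom u, ModuleCat.ofHom (LinearMap.range u).mkQ, hu,
    Submodule.mkQ_surjective _, LinearMap.exact_map_mkQ_range u⟩

theorem HasCosyzygyIn.of_mem_addClosure {S U : Set (ModuleCat.{0} R)} {X : ModuleCat.{0} R}
    (h : ∀ Y ∈ S, HasCosyzygyIn U Y) (hX : X ∈ addClosure R S) :
    HasCosyzygyIn (addClosure R U) X :=
  let ⟨_, _, hf, hX⟩ := hX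
  (hasCosyzygyIn_pi fun i => h _ (hf i)).of_isSummand hX

theorem IsCosyzygyOf.hasCosyzygyIn_of_mem_addOf {T C X : ModuleCat.{0} R}
    (h : IsCosyzygyOf R T C) (hX : X ∈ addOf R T) : HasCosyzygyIn (addOf R C) X :=
  HasCosyzygyIn.of_mem_addClosure
    (fun _ hY => (Set.mem_singleton_iff.1 hY).symm ▸ h.hasCosyzygyIn) hX

theorem HasCosyzygyIn.of_ses {U V : Set (ModuleCat.{0} R)} {A B C : ModuleCat.{0} R}
    (hABC : SES R A B C) (hA : HasCosyzygyIn U A) (hC : HasCosyzygyIn V C) :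
    HasCosyzygyIn {E | ∃ A' ∈ U, ∃ C' ∈ V, SES R A' E C'} B := by
  obtain ⟨f, g, hf, hg, hfg⟩ := hABC
  obtain ⟨JA, QA, hJA, hQA, a, πa, ha, hπa, haπ⟩ := hA
  obtain ⟨JC, QC, hJC, hQC, c, πc, hc, hπc, hcπ⟩ := hC
  obtain ⟨w, qa, qc, hw, hqa, hqc, hqaqc⟩ := exists_injective_copresentation_of_ses
    (f := f.hom) (g := g.hom) hf hg hfg (a := a.hom) ha hπa haπ (c := c.hom) hc hπc hcπ
  exact ⟨ModuleCat.of R (JA × JC), ModuleCat.of R ((JA × JC) ⧸ LinearMap.range w), inferInstance,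
    ⟨QA, hQA, QC, hQC, ModuleCat.ofHom qa, ModuleCat.ofHom qc, hqa, hqc, hqaqc⟩,
    ModuleCat.ofHom w, ModuleCat.ofHom (LinearMap.range w).mkQ, hw,
    Submodule.mkQ_surjective _, LinearMap.exact_map_mkQ_range w⟩

theorem hasCosyzygyIn_bulletChain (m : ℕ) (T C : ℕ → ModuleCat.{0} R)
    (h : ∀ j ≤ m, IsCosyzygyOf R (T j) (C j)) {X : ModuleCat.{0} R}
    (hX : X ∈ bulletChain R ((List.range (m + 1)).map fun j => addOf R (T j))) :
    HasCosyzygyIn (bulletChain R ((List.range (m + 1)).map fun j => addOf R (C j))) X := by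
  induction m generalizing T C X with
  | zero => exact (h 0 le_rfl).hasCosyzygyIn_of_mem_addOf hX
  | succ m ih =>
    rw [bulletChain_range_succ_succ] at hX ⊢
    refine HasCosyzygyIn.of_mem_addClosure ?_ hX
    rintro E ⟨A, hA, C', hC', hAEC⟩
    exact HasCosyzygyIn.of_ses hAEC
      ((h 0 (Nat.zero_le _)).hasCosyzygyIn_of_mem_addOf hA)
      (ih (fun j => T (j + 1)) (fun j => C (j + 1)) (fun j hj => h (j + 1) (by omega)) hC')

theorem mem_bullet_of_ses {U V : Set (ModuleCat.{0} R)} {K B M : ModuleCat.{0} R}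
    (hKBM : SES R K B M) (hB : B ∈ U) (hK : HasCosyzygyIn V K) : M ∈ bullet R U V := by
  obtain ⟨f, g, hf, hg, hfg⟩ := hKBM
  obtain ⟨J, Q, hJ, hQ, v, π, hv, hπ, hvπ⟩ := hK
  obtain ⟨i, q, hi, hq, hiq⟩ :=
    exists_ses_prod_of_injective (f := f.hom) (g := g.hom) hf hg hfg (v := v.hom) hv hπ hvπ
  exact mem_addClosure_of_isSummand (subset_addClosure _ ⟨B, hB, Q, hQ, ModuleCat.ofHom i,
    ModuleCat.ofHom q, hi, hq, hiq⟩) (isSummand_of_comp_eq_id (LinearMap.inr R J M)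
    (LinearMap.snd R J M) (by ext; simp))

theorem mem_addOf_of_iso {T X : ModuleCat.{0} R} (e : T ≅ X) : X ∈ addOf R T :=
  mem_addClosure_of_isSummand (subset_addClosure _ rfl) (isSummand_of_iso e.symm)

-- Stated for `range (d 0)` instead of `W 0`, so that the induction step only shifts `W` and `d`.
theorem range_mem_bulletChain (n : ℕ) (W : ℕ → ModuleCat.{0} R) (d : ∀ i, W (i + 1) ⟶ W i)
    (hinj : Function.Injective (d n)) (hexact : ∀ i < n, Function.Exact (d (i + 1)) (d i))
    (S : ℕ → ModuleCat.{0} R) (hS : ∀ i ≤ n, IsNCosyzygy R i (W (i + 1)) (S i)) :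
    ModuleCat.of R (LinearMap.range (d 0).hom) ∈
      bulletChain R ((List.range (n + 1)).map fun i => addOf R (S i)) := by
  induction n generalizing W d S with
  | zero =>
    obtain ⟨e⟩ := hS 0 le_rfl
    exact mem_addClosure_of_isSummand (mem_addOf_of_iso e)
      (isSummand_of_linearEquiv (LinearEquiv.ofInjective (d 0).hom hinj).symm)
  | succ n ih =>
    choose! S' hS' hS'S using fun j (hj : j ≤ n) => hS (j + 1) (by omega)
    have hK := ih (fun i => W (i + 1)) (fun i => d (i + 1)) hinj
      (fun i hi => hexact (i + 1) (by omega)) S' hS'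
    obtain ⟨e⟩ := hS 0 (Nat.zero_le _)
    rw [bulletChain_range_succ_succ]
    refine mem_bullet_of_ses ⟨ModuleCat.ofHom (LinearMap.range (d 1).hom).subtype,
      ModuleCat.ofHom (d 0).hom.rangeRestrict, Subtype.val_injective,
      LinearMap.surjective_rangeRestrict _, fun y => ?_⟩ (mem_addOf_of_iso e)
      (hasCosyzygyIn_bulletChain n S' (fun j => S (j + 1)) hS'S hK)
    simpa [Subtype.ext_iff] using hexact 0 n.succ_pos y

end ITPaper

namespace ITPaper

/-- Here `W 0 = M`, `W (i+1) = Xᵢ` and `S i` is an `i`-th cosyzygy `Ω⁻ⁱ(Xᵢ)`. -/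
theorem stmt_7_general (R : Type) [Ring R] (n : ℕ)
    (W : ℕ → ModuleCat.{0} R)
    (d : ∀ i, W (i+1) ⟶ W i) (hW : IsExactSeq R (n+1) W d)
    (S : ℕ → ModuleCat.{0} R) (hS : ∀ i, i ≤ n → IsNCosyzygy R i (W (i+1)) (S i)) :
    W 0 ∈ bulletChain R (List.map (fun i => addOf R (S i)) (List.range (n+1))) ∧
    W 0 ∈ bracket R (ModuleCat.of R (∀ i : Fin (n+1), S i)) (n+1) := by
  obtain ⟨hsurj, hinj, hexact⟩ := hW
  have hM : W 0 ∈ bulletChain R ((List.range (n + 1)).map fun i => addOf R (S i)) :=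
    mem_bulletChain_of_isSummand
      (range_mem_bulletChain n W d hinj (fun i hi => hexact i (by omega)) S hS)
      (isSummand_of_linearEquiv (LinearEquiv.ofTop _ (LinearMap.range_eq_top.2 hsurj)).symm)
  refine ⟨hM, bulletChain_subset_bracket n S _ (fun i hi => ?_) hM⟩
  let j : Fin (n + 1) := ⟨i, by omega⟩
  exact isSummand_of_comp_eq_id (LinearMap.single R (fun j : Fin (n + 1) => S j) j)
    (LinearMap.proj j) (by ext; simp)

/-- If `0 → Xₙ → ⋯ → X₁ → X₀ → M → 0` is exact (here `W 0 = M`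
and `W (i+1) = Xᵢ`), and `S i` is an `i`-th cosyzygy `Ω⁻ⁱ(Xᵢ)`, then
`M ∈ [X₀]₁ • [Ω⁻¹(X₁)]₁ • ⋯ • [Ω⁻ⁿ(Xₙ)]₁` and in particular
`M ∈ [⊕_{i=0}^n Ω⁻ⁱ(Xᵢ)]_{n+1}`. -/
theorem stmt_7 (R : Type) [Ring R] [IsArtinianRing R] (n : ℕ)
    (W : ℕ → ModuleCat.{0} R) (hfin : ∀ i, i ≤ n+1 → Module.Finite R (W i))
    (d : ∀ i, W (i+1) ⟶ W i) (hW : IsExactSeq R (n+1) W d)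
    (S : ℕ → ModuleCat.{0} R) (hS : ∀ i, i ≤ n → IsNCosyzygy R i (W (i+1)) (S i)) :
    W 0 ∈ bulletChain R (List.map (fun i => addOf R (S i)) (List.range (n+1))) ∧
    W 0 ∈ bracket R (ModuleCat.of R (∀ i : Fin (n+1), S i)) (n+1) :=
  stmt_7_general R n W d hW S hS

end ITPaper
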